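/- Let G be an invertible element of an associative ℂ-algebra and f : ZMod (2N) → A a family satisfying G * f j = (-1)^j * f (j-1) * G for all j. Then conjugation by G^(2N) acts on each f j as multiplication by (-1)^N, i.e. G^(2N) * f j * G^(-2N) = (-1)^N * f j. Consequently G^(4N) commutes with every f j. -/
import Mathlib

/-- if G f_j = (-1)^j f_{j-1} G, then conjugation by G^(2N) acts on
each f_j as multiplication by (-1)^N, and G^(4N) commutes with every f_j. -/
theorem shift_operator_power_action
    {A : Type*} [Ring A] [Algebra ℂ A] (N : ℕ) (hN : 1 ≤ N)
    (G : Aˣ) (f : ZMod (2 * N) → A)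
    (hG : ∀ j : ZMod (2 * N), (G : A) * f j = (-1 : A) ^ j.val * f (j - 1) * G) :
    (∀ j : ZMod (2 * N),
      (G : A) ^ (2 * N) * f j * ((G⁻¹ : Aˣ) : A) ^ (2 * N) = (-1 : A) ^ N * f j) ∧
    (∀ j : ZMod (2 * N),
      (G : A) ^ (4 * N) * f j = f j * (G : A) ^ (4 * N)) := by
  haveI : NeZero (2 * N) := ⟨by omega⟩
  -- auxiliary induction
  have aux : ∀ k : ℕ, ∀ j : ZMod (2 * N),
      (G : A) ^ k * f j
        = (-1 : A) ^ (∑ i ∈ Finset.range k, (j - (i : ZMod (2 * N))).val)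
            * f (j - (k : ZMod (2 * N))) * (G : A) ^ k := by
    intro k
    induction k with
    | zero => intro j; simp
    | succ k ih =>
      intro j
      have h1 : (G : A) ^ (k + 1) * f j
          = (G : A) ^ k * ((G : A) * f j) := by
        rw [pow_succ, mul_assoc]
      rw [h1, hG j, ← mul_assoc, ← mul_assoc]
      have h2 : (G : A) ^ k * ((-1 : A) ^ j.val)
          = (-1 : A) ^ j.val * (G : A) ^ k :=
        ((Commute.neg_one_left ((G : A) ^ k)).pow_left j.val).symm.eq
      rw [h2, mul_assoc ((-1:A)^j.val), ih (j - 1)]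
      have h3 : j - 1 - (k : ZMod (2 * N)) = j - ((k : ℕ) + 1 : ℕ) := by
        push_cast; ring
      have h4 : (-1 : A) ^ j.val
            * ((-1 : A) ^ (∑ i ∈ Finset.range k, (j - 1 - (i : ZMod (2 * N))).val))
          = (-1 : A) ^ (∑ i ∈ Finset.range (k + 1), (j - (i : ZMod (2 * N))).val) := by
        rw [← pow_add]
        congr 1
        rw [Finset.sum_range_succ' (fun i => (j - (i : ZMod (2 * N))).val) k]
        have : ∀ i : ℕ, (j - 1 - (i : ZMod (2 * N))) = j - ((i : ℕ) + 1 : ℕ) := by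
          intro i; push_cast; ring
        simp only [this]
        simp [add_comm]
      rw [← mul_assoc, ← mul_assoc, h4, h3, pow_succ, ← mul_assoc]
  -- parity of the exponent at k = 2N
  have parity : ∀ j : ZMod (2 * N),
      (-1 : A) ^ (∑ i ∈ Finset.range (2 * N), (j - (i : ZMod (2 * N))).val)
        = (-1 : A) ^ N := by
    intro j
    rw [neg_one_pow_eq_pow_mod_two, neg_one_pow_eq_pow_mod_two (n := N)]
    congr 1
    have key : ∀ i : ℕ, (j - (i : ZMod (2 * N))).val % 2 = (j.val + i) % 2 := by
      intro i
      have h2 : (2 : ℕ) ∣ 2 * N := ⟨N, rfl⟩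
      have hv : ∀ x : ZMod (2 * N), ((x.val : ℕ) : ZMod 2) = ZMod.castHom h2 (ZMod 2) x := by
        intro x; rw [ZMod.castHom_apply, ZMod.natCast_val]
      have heq : (((j - (i : ZMod (2 * N))).val : ℕ) : ZMod 2)
          = ((j.val + i : ℕ) : ZMod 2) := by
        rw [hv, map_sub, map_natCast, CharTwo.sub_eq_add, Nat.cast_add, hv]
      exact (ZMod.natCast_eq_natCast_iff _ _ _).mp heq
    calc (∑ i ∈ Finset.range (2 * N), (j - (i : ZMod (2 * N))).val) % 2
        = (∑ i ∈ Finset.range (2 * N), ((j - (i : ZMod (2 * N))).val % 2)) % 2 :=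
          (Finset.sum_nat_mod _ _ _)
      _ = (∑ i ∈ Finset.range (2 * N), ((j.val + i) % 2)) % 2 := by
          simp only [key]
      _ = (∑ i ∈ Finset.range (2 * N), (j.val + i)) % 2 := (Finset.sum_nat_mod _ _ _).symm
      _ = (2 * N * j.val + (∑ i ∈ Finset.range (2 * N), i)) % 2 := by
          rw [Finset.sum_add_distrib, Finset.sum_const, Finset.card_range, smul_eq_mul]
      _ = N % 2 := by
          rw [Finset.sum_range_id]
          have hdiv : 2 * N * (2 * N - 1) / 2 = N * (2 * N - 1) := by
            rw [mul_assoc, Nat.mul_div_cancel_left _ (by norm_num : 0 < 2)]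
          rw [hdiv]
          obtain ⟨M, hM⟩ : ∃ M, 2 * N - 1 = 2 * M + 1 := ⟨N - 1, by omega⟩
          rw [hM]
          have hr : 2 * N * j.val + N * (2 * M + 1) = 2 * (N * j.val + N * M) + N := by ring
          rw [hr, Nat.mul_add_mod]
  have main : ∀ j : ZMod (2 * N),
      (G : A) ^ (2 * N) * f j = (-1 : A) ^ N * f j * (G : A) ^ (2 * N) := by
    intro j
    have := aux (2 * N) j
    rw [parity j] at this
    rwa [ZMod.natCast_self, sub_zero] at this
  constructor
  · intro j
    have hinv : (G : A) ^ (2 * N) * ((G⁻¹ : Aˣ) : A) ^ (2 * N) = 1 := by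
      rw [← Units.val_pow_eq_pow_val, ← Units.val_pow_eq_pow_val, ← Units.val_mul,
        inv_pow, mul_inv_cancel, Units.val_one]
    rw [main j, mul_assoc, mul_assoc, hinv, mul_one]
  · intro j
    have hone : (-1 : A) ^ N * (-1 : A) ^ N = 1 := by
      rw [← pow_add]; exact Even.neg_one_pow ⟨N, by ring⟩
    have h4 : (G : A) ^ (4 * N) = (G : A) ^ (2 * N) * (G : A) ^ (2 * N) := by
      rw [← pow_add]; congr 1; ring
    have hc : (G : A) ^ (2 * N) * (-1 : A) ^ N = (-1 : A) ^ N * (G : A) ^ (2 * N) :=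
      ((Commute.neg_one_left ((G : A) ^ (2 * N))).pow_left N).symm.eq
    have step : (G : A) ^ (2 * N) * ((-1 : A) ^ N * f j * (G : A) ^ (2 * N))
        = f j * ((G : A) ^ (2 * N) * (G : A) ^ (2 * N)) := by
      calc (G : A) ^ (2 * N) * ((-1 : A) ^ N * f j * (G : A) ^ (2 * N))
          = ((G : A) ^ (2 * N) * (-1 : A) ^ N) * (f j * (G : A) ^ (2 * N)) := by
            simp only [mul_assoc]
        _ = (-1 : A) ^ N * ((G : A) ^ (2 * N) * f j) * (G : A) ^ (2 * N) := by
            rw [hc]; simp only [mul_assoc]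
        _ = (-1 : A) ^ N * ((-1 : A) ^ N * f j * (G : A) ^ (2 * N)) * (G : A) ^ (2 * N) := by
            rw [main j]
        _ = ((-1 : A) ^ N * (-1 : A) ^ N) * (f j * ((G : A) ^ (2 * N) * (G : A) ^ (2 * N))) := by
            simp only [mul_assoc]
        _ = f j * ((G : A) ^ (2 * N) * (G : A) ^ (2 * N)) := by rw [hone, one_mul]
    rw [h4, mul_assoc, main j, step]
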